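/- Let x, x_* ∈ ℂⁿ satisfy A x_* = b, let η ∈ ℂ^m with Aᴴη ≠ 0, let α ∈ ℝ, and set g = ηᴴ(b − Ax)/‖Aᴴη‖₂². Then ‖x − x_* + α·g·Aᴴη‖₂² = ‖x − x_*‖₂² + (α² − 2α)·φ(x, η). -/

import Mathlib

open Matrix Finset

noncomputable section

/-- Squared Euclidean norm `‖v‖₂²` of a complex vector. -/
def vecNormSq {k : ℕ} (v : Fin k → ℂ) : ℝ := ∑ i, ‖v i‖ ^ 2

variable {m n : ℕ}

/-- Squared Euclidean norm `‖A_{i,:}‖₂²` of the `i`-th row of `A`. -/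
def rowNormSq (A : Matrix (Fin m) (Fin n) ℂ) (i : Fin m) : ℝ := ∑ j, ‖A i j‖ ^ 2

/-- Squared Frobenius norm `‖A‖_F²`. -/
def frobSq (A : Matrix (Fin m) (Fin n) ℂ) : ℝ := ∑ i, ∑ j, ‖A i j‖ ^ 2

/-- `ψ_i(x) = |b_i − A_{i,:} x|² / ‖A_{i,:}‖₂²`. -/
def psi (A : Matrix (Fin m) (Fin n) ℂ) (b : Fin m → ℂ) (x : Fin n → ℂ) (i : Fin m) : ℝ :=
  ‖b i - A.mulVec x i‖ ^ 2 / rowNormSq A i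

/-- `max_{i ∈ [m]} ψ_i(x)`. -/
def psiMax (A : Matrix (Fin m) (Fin n) ℂ) (b : Fin m → ℂ) (x : Fin n → ℂ) : ℝ :=
  ⨆ i, psi A b x i

/-- The row submatrix `A_{S,:}` of `A`, realized by replacing the rows outside `S` with zero
(which changes neither the Frobenius norm nor the largest singular value). -/
def rowSub (A : Matrix (Fin m) (Fin n) ℂ) (S : Finset (Fin m)) : Matrix (Fin m) (Fin n) ℂ :=
  fun i j => if i ∈ S then A i j else 0

/-- `σ_r(A)²` : the smallest nonzero eigenvalue of `AᴴA`. -/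
def sigmaRSq (A : Matrix (Fin m) (Fin n) ℂ) : ℝ :=
  sInf {μ : ℝ | μ ≠ 0 ∧ ∃ i, (Matrix.isHermitian_conjTranspose_mul_self A).eigenvalues i = μ}

/-- `σ₁(M)²` : the largest eigenvalue of `MᴴM`, i.e. the largest singular value squared. -/
def sigma1Sq {k : Type*} [Fintype k] (M : Matrix k (Fin n) ℂ) : ℝ :=
  ⨆ i, (Matrix.isHermitian_conjTranspose_mul_self M).eigenvalues i

/-- `Û(x) = {i ∈ [m] : ψ_i(x) ≠ 0}`. -/
def Uhat (A : Matrix (Fin m) (Fin n) ℂ) (b : Fin m → ℂ) (x : Fin n → ℂ) : Finset (Fin m) :=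
  Finset.univ.filter fun i => psi A b x i ≠ 0

/-- The greedy index set `U(x)` with relaxation parameter `θ = 1/2`. -/
def Ugreedy (A : Matrix (Fin m) (Fin n) ℂ) (b : Fin m → ℂ) (x : Fin n → ℂ) : Finset (Fin m) :=
  Finset.univ.filter fun i =>
    (1 / 2) * psiMax A b x + (1 / 2) * (vecNormSq (b - A.mulVec x) / frobSq A) ≤ psi A b x i

/-- `η(x) = Σ_{i ∈ U(x)} (b_i − A_{i,:}x) e_i`. -/
def eta (A : Matrix (Fin m) (Fin n) ℂ) (b : Fin m → ℂ) (x : Fin n → ℂ) : Fin m → ℂ :=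
  fun i => if i ∈ Ugreedy A b x then b i - A.mulVec x i else 0

/-- `uᴴ v`, the conjugate dot product. -/
def dotc {k : ℕ} (u v : Fin k → ℂ) : ℂ := ∑ i, (starRingEnd ℂ) (u i) * v i

/-- `φ(x, η) = |ηᴴ(b − A x)|² / ‖Aᴴ η‖₂²`. -/
def phi (A : Matrix (Fin m) (Fin n) ℂ) (b : Fin m → ℂ) (x : Fin n → ℂ) (η : Fin m → ℂ) : ℝ :=
  ‖dotc η (b - A.mulVec x)‖ ^ 2 / vecNormSq (Aᴴ.mulVec η)

end

/-! Since `A x_* = b`, we have `ηᴴ(b − Ax) = ⟪Aᴴη, x_* − x⟫`, so with `u = x − x_*` and `w = Aᴴη`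
the update is `u ↦ u − α P u`, where `P` is the orthogonal projection onto `span {w}`. Expanding
`‖u + t w‖² = ‖u‖² + 2 Re ⟪u, t w⟫ + |t|² ‖w‖²`, the cross term is real because
`⟪w, u⟫ · conj ⟪w, u⟫ = |⟪w, u⟫|²`. -/

open scoped InnerProductSpace

theorem norm_add_relaxed_proj_sq {𝕜 E : Type*} [RCLike 𝕜] [NormedAddCommGroup E]
    [InnerProductSpace 𝕜 E] (u w : E) (α : ℝ) :
    ‖u + ((α : 𝕜) * (⟪w, -u⟫_𝕜 / ((‖w‖ ^ 2 : ℝ) : 𝕜))) • w‖ ^ 2 =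
      ‖u‖ ^ 2 + (α ^ 2 - 2 * α) * (‖⟪w, u⟫_𝕜‖ ^ 2 / ‖w‖ ^ 2) := by
  rcases eq_or_ne w 0 with rfl | hw
  · simp
  have hcross : RCLike.re ⟪u, ((α : 𝕜) * (⟪w, -u⟫_𝕜 / ((‖w‖ ^ 2 : ℝ) : 𝕜))) • w⟫_𝕜 =
      -α * (‖⟪w, u⟫_𝕜‖ ^ 2 / ‖w‖ ^ 2) := by
    rw [inner_smul_right, inner_neg_right, ← inner_conj_symm u w]
    have hreal : (α : 𝕜) * (-⟪w, u⟫_𝕜 / ((‖w‖ ^ 2 : ℝ) : 𝕜)) * (starRingEnd 𝕜) ⟪w, u⟫_𝕜 =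
        ((-α * (‖⟪w, u⟫_𝕜‖ ^ 2 / ‖w‖ ^ 2) : ℝ) : 𝕜) := by
      rw [neg_div, mul_neg, neg_mul, mul_assoc, div_mul_eq_mul_div, RCLike.mul_conj]
      push_cast
      ring
    rw [hreal, RCLike.ofReal_re]
  have hstep : ‖((α : 𝕜) * (⟪w, -u⟫_𝕜 / ((‖w‖ ^ 2 : ℝ) : 𝕜))) • w‖ ^ 2 =
      α ^ 2 * (‖⟪w, u⟫_𝕜‖ ^ 2 / ‖w‖ ^ 2) := by
    rw [norm_smul, norm_mul, norm_div, inner_neg_right, norm_neg, RCLike.norm_ofReal,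
      RCLike.norm_ofReal, abs_of_nonneg (by positivity : (0:ℝ) ≤ ‖w‖ ^ 2)]
    field_simp
    rw [sq_abs]
    ring
  rw [norm_add_sq (𝕜 := 𝕜), hcross, hstep]
  ring

theorem vecNormSq_eq_norm_sq {k : ℕ} (v : Fin k → ℂ) : vecNormSq v = ‖WithLp.toLp 2 v‖ ^ 2 := by
  rw [EuclideanSpace.norm_sq_eq]
  rfl

theorem dotc_eq_inner {k : ℕ} (u v : Fin k → ℂ) :
    dotc u v = ⟪WithLp.toLp 2 u, WithLp.toLp 2 v⟫_ℂ := by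
  rw [EuclideanSpace.inner_eq_star_dotProduct, dotProduct_comm]
  rfl

theorem dotc_conjTranspose_mulVec {m n : ℕ} (A : Matrix (Fin m) (Fin n) ℂ) (η : Fin m → ℂ)
    (y : Fin n → ℂ) : dotc (Aᴴ *ᵥ η) y = dotc η (A *ᵥ y) := by
  change star (Aᴴ *ᵥ η) ⬝ᵥ y = star η ⬝ᵥ (A *ᵥ y)
  rw [star_mulVec, conjTranspose_conjTranspose, dotProduct_mulVec]

theorem stmt16_general {m n : ℕ} (A : Matrix (Fin m) (Fin n) ℂ) (b : Fin m → ℂ)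
    (x xs : Fin n → ℂ) (hxs : A.mulVec xs = b)
    (η : Fin m → ℂ) (α : ℝ) :
    vecNormSq (x - xs +
        ((α : ℂ) * (dotc η (b - A.mulVec x) / (vecNormSq (Aᴴ.mulVec η) : ℂ))) • Aᴴ.mulVec η) =
      vecNormSq (x - xs) + (α ^ 2 - 2 * α) * phi A b x η := by
  have hres : dotc η (b - A *ᵥ x) = ⟪WithLp.toLp 2 (Aᴴ *ᵥ η), -WithLp.toLp 2 (x - xs)⟫_ℂ := by
    rw [← hxs, ← mulVec_sub, ← dotc_conjTranspose_mulVec, dotc_eq_inner, ← WithLp.toLp_neg,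
      neg_sub]
  rw [phi, hres, inner_neg_right, norm_neg, vecNormSq_eq_norm_sq, vecNormSq_eq_norm_sq (x - xs),
    vecNormSq_eq_norm_sq (Aᴴ *ᵥ η), WithLp.toLp_add, WithLp.toLp_smul, ← inner_neg_right]
  exact norm_add_relaxed_proj_sq _ _ α

/-- sketched projection one-step identity: if `A x_* = b`, `Aᴴη ≠ 0` and
`g = ηᴴ(b − Ax)/‖Aᴴη‖₂²`, then
`‖x − x_* + α g Aᴴη‖₂² = ‖x − x_*‖₂² + (α² − 2α) φ(x, η)`. -/
theorem stmt16 {m n : ℕ} (A : Matrix (Fin m) (Fin n) ℂ) (b : Fin m → ℂ)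
    (x xs : Fin n → ℂ) (hxs : A.mulVec xs = b)
    (η : Fin m → ℂ) (hη : Aᴴ.mulVec η ≠ 0) (α : ℝ) :
    vecNormSq (x - xs +
        ((α : ℂ) * (dotc η (b - A.mulVec x) / (vecNormSq (Aᴴ.mulVec η) : ℂ))) • Aᴴ.mulVec η) =
      vecNormSq (x - xs) + (α ^ 2 - 2 * α) * phi A b x η :=
  stmt16_general A b x xs hxs η α
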